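/- arXiv:1008.3572 — 6 statements merged into one kernel-verified Lean document; each statement's English description precedes it below -/
import Mathlib

section
/- For every α ≥ 0, P_0(α) ⊆ U_α and Z_0(α) ⊆ U_α; that is, every point of the closed ball B_r(p) that does not lie in the interior of the power cell P(α) is within distance α of U, and every point of B_r(p) ∩ B_r(q) that does not lie in the interior of Z(α) is within distance α of U. -/
/-!
A point `x` of `B_r(p)` outside the interior of the power cell also lies outside the open set
where all the defining inequalities are strict, so for some `u ∈ U` we have
`‖x - u‖² - α² ≤ ‖x - p‖² - r² ≤ 0`, i.e. `‖x - u‖ ≤ α`. For `Z(α)` use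
`interior (P ∩ Q) = interior P ∩ interior Q`, which reduces the claim to the one for `P` or `Q`.
-/

open Metric Set

noncomputable section

/-- The distance function to a finite point set `U`. -/
def distU {k : ℕ} (U : Finset (EuclideanSpace ℝ (Fin k))) (x : EuclideanSpace ℝ (Fin k)) : ℝ :=
  Metric.infDist x (U : Set (EuclideanSpace ℝ (Fin k)))

/-- The α-offset `U_α` of a finite point set `U`. -/
def offsetU {k : ℕ} (U : Finset (EuclideanSpace ℝ (Fin k))) (α : ℝ) :
    Set (EuclideanSpace ℝ (Fin k)) :=
  {x | distU U x ≤ α}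

/-- The power cell of the ball `B_r(p)` at level `α`. -/
def pcell {k : ℕ} (U : Finset (EuclideanSpace ℝ (Fin k))) (p : EuclideanSpace ℝ (Fin k))
    (r α : ℝ) : Set (EuclideanSpace ℝ (Fin k)) :=
  {x | ∀ u ∈ U, dist x p ^ 2 - r ^ 2 ≤ dist x u ^ 2 - α ^ 2}

section PowerCell

variable {k : ℕ} (U : Finset (EuclideanSpace ℝ (Fin k))) (p : EuclideanSpace ℝ (Fin k))
  (r α : ℝ)

lemma isOpen_setOf_forall_powerDist_lt {X : Type*} [PseudoMetricSpace X] (U : Finset X)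
    (p : X) (r α : ℝ) :
    IsOpen {y | ∀ u ∈ U, dist y p ^ 2 - r ^ 2 < dist y u ^ 2 - α ^ 2} := by
  simp only [ofPred_forall]
  exact isOpen_biInter_finset fun u _ => isOpen_lt (by fun_prop) (by fun_prop)

lemma setOf_forall_powerDist_lt_subset_interior_pcell :
    {y | ∀ u ∈ U, dist y p ^ 2 - r ^ 2 < dist y u ^ 2 - α ^ 2} ⊆ interior (pcell U p r α) :=
  interior_maximal (fun _ hy u hu => (hy u hu).le) (isOpen_setOf_forall_powerDist_lt U p r α)

lemma mem_offsetU_of_dist_le {U : Finset (EuclideanSpace ℝ (Fin k))} {α : ℝ}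
    {x u : EuclideanSpace ℝ (Fin k)} (hu : u ∈ U) (h : dist x u ≤ α) : x ∈ offsetU U α :=
  (infDist_le_dist_of_mem (Finset.mem_coe.mpr hu)).trans h

variable {α} in
lemma closedBall_diff_interior_pcell_subset_offsetU (hα : 0 ≤ α) :
    closedBall p r \ interior (pcell U p r α) ⊆ offsetU U α := by
  rintro x ⟨hxp, hxi⟩
  have hx_strict : x ∉ {y | ∀ u ∈ U, dist y p ^ 2 - r ^ 2 < dist y u ^ 2 - α ^ 2} :=
    fun h => hxi (setOf_forall_powerDist_lt_subset_interior_pcell U p r α h)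
  simp only [mem_ofPred_eq, not_forall, not_lt] at hx_strict
  obtain ⟨u, hu, hle⟩ := hx_strict
  have hxp : dist x p ≤ r := mem_closedBall.mp hxp
  refine mem_offsetU_of_dist_le hu ?_
  nlinarith [dist_nonneg (x := x) (y := u), dist_nonneg (x := x) (y := p)]

end PowerCell

theorem stmt0_general {k : ℕ} (U : Finset (EuclideanSpace ℝ (Fin k)))
    (p q : EuclideanSpace ℝ (Fin k)) (r : ℝ) :
    ∀ α : ℝ, 0 ≤ α →
      (closedBall p r \ interior (pcell U p r α) ⊆ offsetU U α) ∧
      ((closedBall p r ∩ closedBall q r) \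
          interior (pcell U p r α ∩ pcell U q r α) ⊆ offsetU U α) := by
  intro α hα
  have hP := closedBall_diff_interior_pcell_subset_offsetU U p r hα
  have hQ := closedBall_diff_interior_pcell_subset_offsetU U q r hα
  refine ⟨hP, ?_⟩
  rw [interior_inter, sdiff_inter]
  exact union_subset ((sdiff_subset_sdiff_left inter_subset_left).trans hP)
    ((sdiff_subset_sdiff_left inter_subset_right).trans hQ)

/-- for every `α ≥ 0`, `P_0(α) ⊆ U_α` and `Z_0(α) ⊆ U_α`. -/
theorem stmt0 {k : ℕ} (U : Finset (EuclideanSpace ℝ (Fin k))) (hU : U.Nonempty)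
    (p q : EuclideanSpace ℝ (Fin k)) (r : ℝ) (hr : 0 < r) :
    ∀ α : ℝ, 0 ≤ α →
      (closedBall p r \ interior (pcell U p r α) ⊆ offsetU U α) ∧
      ((closedBall p r ∩ closedBall q r) \
          interior (pcell U p r α ∩ pcell U q r α) ⊆ offsetU U α) :=
  stmt0_general U p q r
end
end

section
/- Convexity Lemma: assume the nondegeneracy condition. Then for every u ∈ U, the sets V(u) ∩ Π_q ∩ B_r(p) ∩ Z_0(α) (the intersection of the lune part of the Voronoi cell with Z_0(α)) and V(u) ∩ Π_p ∩ B_r(p) ∩ Z_0(α) (the intersection of the moon part of the Voronoi cell with Z_0(α)) are convex. -/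
open Metric Set

noncomputable section

/-- `Z_0(α) = (B_r(p) ∩ B_r(q)) \ int (P(α) ∩ Q(α))`. -/
def Z0 {k : ℕ} (U : Finset (EuclideanSpace ℝ (Fin k))) (p q : EuclideanSpace ℝ (Fin k))
    (r α : ℝ) : Set (EuclideanSpace ℝ (Fin k)) :=
  (closedBall p r ∩ closedBall q r) \ interior (pcell U p r α ∩ pcell U q r α)

/-- The Voronoi cell of a point `u` with respect to the point set `U`. -/
def vcell {k : ℕ} (U : Finset (EuclideanSpace ℝ (Fin k))) (u : EuclideanSpace ℝ (Fin k)) :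
    Set (EuclideanSpace ℝ (Fin k)) :=
  {x | ∀ u' ∈ U, dist x u ≤ dist x u'}

/-- The closed half-space of points at least as close to `p` as to `q`. -/
def halfSpace {k : ℕ} (p q : EuclideanSpace ℝ (Fin k)) : Set (EuclideanSpace ℝ (Fin k)) :=
  {x | dist x p ≤ dist x q}

/-! On the part of `V(u)` closer to `q` than to `p`, the binding constraint of `P(α) ∩ Q(α)`
is the `(p, u)` one. So there `Z_0(α)` is cut out of the lens `B_r(p) ∩ B_r(q)` by the
half-space `‖x - p‖² - ‖x - u‖² ≥ r² - α²`, and Voronoi cells and bisector half-spaces are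
convex as well. The moon part is the lune part with `p` and `q` exchanged. -/

section InnerProductSpace

variable {E : Type*} [NormedAddCommGroup E] [InnerProductSpace ℝ E]

lemma dist_sq_sub_dist_sq (p u x : E) :
    dist x p ^ 2 - dist x u ^ 2 = 2 * inner ℝ x (u - p) + (‖p‖ ^ 2 - ‖u‖ ^ 2) := by
  rw [dist_eq_norm, dist_eq_norm, norm_sub_sq_real, norm_sub_sq_real, inner_sub_right]
  ring

lemma convex_setOf_le_dist_sq_sub_dist_sq (p u : E) (c : ℝ) :
    Convex ℝ {x : E | c ≤ dist x p ^ 2 - dist x u ^ 2} := by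
  simp_rw [dist_sq_sub_dist_sq, ← sub_le_iff_le_add]
  refine convex_halfSpace_ge ⟨fun x y => ?_, fun a x => ?_⟩ _
  · rw [inner_add_left]; ring
  · rw [real_inner_smul_left, smul_eq_mul]; ring

lemma convex_setOf_dist_le_dist (p q : E) : Convex ℝ {x : E | dist x p ≤ dist x q} := by
  simpa only [sub_nonneg, sq_le_sq₀ dist_nonneg dist_nonneg] using
    convex_setOf_le_dist_sq_sub_dist_sq q p 0

/-- A nonconstant affine function cannot attain its supremum over a neighbourhood. -/
lemma dist_sq_sub_dist_sq_lt_of_mem_interior {p u x : E} (hpu : p ≠ u) {c : ℝ}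
    (hx : x ∈ interior {y : E | dist y p ^ 2 - dist y u ^ 2 ≤ c}) :
    dist x p ^ 2 - dist x u ^ 2 < c := by
  have hmove :
      Filter.Tendsto (fun t : ℝ => x + t • (u - p)) (nhdsWithin 0 (Ioi 0)) (nhds x) := by
    refine tendsto_nhdsWithin_of_tendsto_nhds ?_
    exact (by fun_prop : Continuous fun t : ℝ => x + t • (u - p)).tendsto' 0 x (by simp)
  obtain ⟨t, hle, ht⟩ :=
    ((hmove.eventually (mem_interior_iff_mem_nhds.mp hx)).and self_mem_nhdsWithin).exists
  have hshift : dist (x + t • (u - p)) p ^ 2 - dist (x + t • (u - p)) u ^ 2 =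
      dist x p ^ 2 - dist x u ^ 2 + 2 * t * ‖u - p‖ ^ 2 := by
    rw [dist_sq_sub_dist_sq, dist_sq_sub_dist_sq, inner_add_left, real_inner_smul_left,
      real_inner_self_eq_norm_sq]
    ring
  have hpos : 0 < t * ‖u - p‖ ^ 2 :=
    mul_pos ht (pow_pos (norm_pos_iff.mpr (sub_ne_zero.mpr hpu.symm)) 2)
  rw [hshift] at hle
  linarith

end InnerProductSpace

variable {k : ℕ} {U : Finset (EuclideanSpace ℝ (Fin k))} {p q u x : EuclideanSpace ℝ (Fin k)}
  {r α : ℝ}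

lemma convex_halfSpace (p q : EuclideanSpace ℝ (Fin k)) : Convex ℝ (halfSpace p q) :=
  convex_setOf_dist_le_dist p q

lemma convex_vcell (U : Finset (EuclideanSpace ℝ (Fin k))) (u : EuclideanSpace ℝ (Fin k)) :
    Convex ℝ (vcell U u) := by
  have : vcell U u = ⋂ u' ∈ U, {x | dist x u ≤ dist x u'} := by
    ext x; simp [vcell]
  rw [this]
  exact convex_iInter₂ fun u' _ => convex_setOf_dist_le_dist u u'

lemma Z0_comm (U : Finset (EuclideanSpace ℝ (Fin k))) (p q : EuclideanSpace ℝ (Fin k))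
    (r α : ℝ) : Z0 U p q r α = Z0 U q p r α := by
  rw [Z0, Z0, inter_comm (closedBall p r), inter_comm (pcell U p r α)]

lemma mem_interior_pcell (h : ∀ u ∈ U, dist x p ^ 2 - r ^ 2 < dist x u ^ 2 - α ^ 2) :
    x ∈ interior (pcell U p r α) := by
  rw [mem_interior_iff_mem_nhds]
  change ∀ᶠ y in nhds x, ∀ u ∈ U, _
  rw [Filter.eventually_all_finset]
  intro u hu
  have hcont (v : EuclideanSpace ℝ (Fin k)) (c : ℝ) :
      Continuous fun y : EuclideanSpace ℝ (Fin k) => dist y v ^ 2 - c := by fun_prop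
  filter_upwards [(hcont p _).continuousAt.eventually_lt (hcont u _).continuousAt (h u hu)]
    with y hy using hy.le

lemma dist_sq_sub_dist_sq_lt_of_mem_interior_pcell (hu : u ∈ U) (hα : 0 ≤ α)
    (hndp : p ∈ U → α < r) (hx : x ∈ interior (pcell U p r α)) :
    dist x p ^ 2 - dist x u ^ 2 < r ^ 2 - α ^ 2 := by
  rcases eq_or_ne p u with rfl | hpu
  · have := hndp hu
    nlinarith
  · refine dist_sq_sub_dist_sq_lt_of_mem_interior hpu (interior_mono (fun y hy => ?_) hx)
    have := hy u hu
    simp only [mem_ofPred_eq]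
    linarith

lemma mem_interior_pcell_inter_iff (hu : u ∈ U) (hα : 0 ≤ α) (hndp : p ∈ U → α < r)
    (hxu : x ∈ vcell U u) (hxq : x ∈ halfSpace q p) :
    x ∈ interior (pcell U p r α ∩ pcell U q r α) ↔
      dist x p ^ 2 - dist x u ^ 2 < r ^ 2 - α ^ 2 := by
  rw [interior_inter]
  refine ⟨fun hx => dist_sq_sub_dist_sq_lt_of_mem_interior_pcell hu hα hndp hx.1, fun hx => ?_⟩
  have hqp : dist x q ^ 2 ≤ dist x p ^ 2 := pow_le_pow_left₀ dist_nonneg hxq 2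
  have hxu' : ∀ u' ∈ U, dist x u ^ 2 ≤ dist x u' ^ 2 :=
    fun u' hu' => pow_le_pow_left₀ dist_nonneg (hxu u' hu') 2
  exact ⟨mem_interior_pcell fun u' hu' => by linarith [hxu' u' hu'],
    mem_interior_pcell fun u' hu' => by linarith [hxu' u' hu']⟩

lemma vcell_inter_halfSpace_inter_Z0 (hu : u ∈ U) (hα : 0 ≤ α) (hndp : p ∈ U → α < r) :
    vcell U u ∩ halfSpace q p ∩ Z0 U p q r α =
      vcell U u ∩ halfSpace q p ∩ (closedBall p r ∩ closedBall q r) ∩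
        {x | r ^ 2 - α ^ 2 ≤ dist x p ^ 2 - dist x u ^ 2} := by
  ext x
  simp only [Z0, mem_inter_iff, mem_sdiff, mem_ofPred_eq]
  constructor
  · rintro ⟨⟨hxu, hxq⟩, hball, hx⟩
    have key := mem_interior_pcell_inter_iff hu hα hndp hxu hxq
    exact ⟨⟨⟨hxu, hxq⟩, hball⟩, not_lt.mp (mt key.mpr hx)⟩
  · rintro ⟨⟨⟨hxu, hxq⟩, hball⟩, hx⟩
    have key := mem_interior_pcell_inter_iff hu hα hndp hxu hxq
    exact ⟨⟨hxu, hxq⟩, hball, fun h => (key.mp h).not_ge hx⟩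

lemma convex_vcell_inter_halfSpace_inter_Z0 (hu : u ∈ U) (hα : 0 ≤ α)
    (hndp : p ∈ U → α < r) : Convex ℝ (vcell U u ∩ halfSpace q p ∩ Z0 U p q r α) := by
  rw [vcell_inter_halfSpace_inter_Z0 hu hα hndp]
  exact (((convex_vcell U u).inter (convex_halfSpace q p)).inter
    ((convex_closedBall p r).inter (convex_closedBall q r))).inter
    (convex_setOf_le_dist_sq_sub_dist_sq p u _)

theorem stmt3_general {k : ℕ} (U : Finset (EuclideanSpace ℝ (Fin k)))
    (p q : EuclideanSpace ℝ (Fin k)) (r : ℝ) (α : ℝ) (hα : 0 ≤ α)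
    (hndp : p ∈ U → α < r) (hndq : q ∈ U → α < r) :
    ∀ u ∈ U,
      Convex ℝ (vcell U u ∩ halfSpace q p ∩ closedBall p r ∩ Z0 U p q r α) ∧
      Convex ℝ (vcell U u ∩ halfSpace p q ∩ closedBall p r ∩ Z0 U p q r α) := by
  intro u hu
  simp only [inter_right_comm _ (closedBall p r)]
  constructor
  · exact (convex_vcell_inter_halfSpace_inter_Z0 hu hα hndp).inter (convex_closedBall p r)
  · rw [Z0_comm U p q]
    exact (convex_vcell_inter_halfSpace_inter_Z0 hu hα hndq).inter (convex_closedBall p r)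

/-- Convexity Lemma: under the nondegeneracy condition, the intersections of
the lune part `V(u) ∩ Π_q ∩ B_r(p)` and of the moon part `V(u) ∩ Π_p ∩ B_r(p)` of the
Voronoi cell with `Z_0(α)` are convex. -/
theorem stmt3 {k : ℕ} (U : Finset (EuclideanSpace ℝ (Fin k))) (hU : U.Nonempty)
    (p q : EuclideanSpace ℝ (Fin k)) (r : ℝ) (hr : 0 < r) (α : ℝ) (hα : 0 ≤ α)
    (hndp : p ∈ U → α < r) (hndq : q ∈ U → α < r) :
    ∀ u ∈ U,
      Convex ℝ (vcell U u ∩ halfSpace q p ∩ closedBall p r ∩ Z0 U p q r α) ∧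
      Convex ℝ (vcell U u ∩ halfSpace p q ∩ closedBall p r ∩ Z0 U p q r α) :=
  stmt3_general U p q r α hα hndp hndq
end
end

section
/- Containment Lemma: assume the nondegeneracy condition, and let σ ⊆ U be nonempty. If V_σ ∩ P_0(α) ≠ ∅ and V_σ ∩ U_α ∩ B_r(p) ∩ B_r(q) ≠ ∅, then V_σ ∩ Z_0(α) ≠ ∅. (In the nerve terminology of the paper: if a simplex σ lies in L_0(α) and also in K(α), then σ lies in K_0(α).) -/
/-!
Let `Z = P(α) ∩ Q(α)`, a closed set. A witness `y ∈ V_σ ∩ U_α ∩ B_r(p) ∩ B_r(q)` lies in `Z_0(α)`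
unless `y ∈ int Z`; then the segment from `y` to a witness `x ∈ V_σ ∩ P_0(α)`, which is not in
`int Z`, meets `Z \ int Z` at some `z`. Both `x` (where some power-cell inequality fails) and `y`
are within `α` of `U`, hence of every `u ∈ σ`, and by convexity so is `z ∈ V_σ`. For `z ∈ Z` this
gives `‖z - p‖² - r² ≤ ‖z - u‖² - α² ≤ 0`, and likewise for `q`.
-/

open Metric Set

noncomputable section

/-- `P_0(α) = B_r(p) \ int P(α)`. -/
def P0 {k : ℕ} (U : Finset (EuclideanSpace ℝ (Fin k))) (p : EuclideanSpace ℝ (Fin k))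
    (r α : ℝ) : Set (EuclideanSpace ℝ (Fin k)) :=
  closedBall p r \ interior (pcell U p r α)

/-- The common Voronoi cell `V_σ = ⋂_{u ∈ σ} V(u)` of a subset `σ ⊆ U`. -/
def vcellInter {k : ℕ} (U σ : Finset (EuclideanSpace ℝ (Fin k))) :
    Set (EuclideanSpace ℝ (Fin k)) :=
  ⋂ u ∈ σ, vcell U u


theorem convex_setOf_dist_le_dist_s4 {E : Type*} [NormedAddCommGroup E] [InnerProductSpace ℝ E]
    (u v : E) : Convex ℝ {w : E | dist w u ≤ dist w v} := by
  have halfSpace : {w : E | dist w u ≤ dist w v} =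
      {w | inner ℝ (v - u) w ≤ (‖v‖ ^ 2 - ‖u‖ ^ 2) / 2} := by
    ext w
    rw [mem_ofPred_eq, mem_ofPred_eq, ← sq_le_sq₀ dist_nonneg dist_nonneg, dist_eq_norm,
      dist_eq_norm, norm_sub_sq_real, norm_sub_sq_real, inner_sub_left, real_inner_comm w,
      real_inner_comm w]
    constructor <;> intro <;> linarith
  rw [halfSpace]
  exact convex_halfSpace_le (innerₛₗ ℝ (v - u)).isLinear _

section

open Topology

variable {k : ℕ} {U σ : Finset (EuclideanSpace ℝ (Fin k))}
  {p u u' x : EuclideanSpace ℝ (Fin k)} {r α : ℝ}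

theorem convex_vcellInter : Convex ℝ (vcellInter U σ) := by
  simp only [vcellInter, vcell, ofPred_forall]
  exact convex_iInter₂ fun u _ => convex_iInter₂ fun u' _ => convex_setOf_dist_le_dist_s4 u u'

theorem dist_le_of_mem_vcellInter (hx : x ∈ vcellInter U σ) (hu : u ∈ σ) (hu' : u' ∈ U) :
    dist x u ≤ dist x u' := by
  simp only [vcellInter, vcell, mem_iInter] at hx
  exact hx u hu u' hu'

theorem distU_eq_dist_of_mem_vcellInter (hσU : σ ⊆ U) (hx : x ∈ vcellInter U σ)
    (hu : u ∈ σ) : distU U x = dist x u :=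
  le_antisymm (infDist_le_dist_of_mem (hσU hu))
    ((le_infDist ⟨u, hσU hu⟩).2 fun _ hu' => dist_le_of_mem_vcellInter hx hu hu')

theorem vcellInter_inter_offsetU_subset_closedBall (hσU : σ ⊆ U) (hu : u ∈ σ) :
    vcellInter U σ ∩ offsetU U α ⊆ closedBall u α := fun _ ⟨hxV, hxα⟩ =>
  mem_closedBall.2 (distU_eq_dist_of_mem_vcellInter hσU hxV hu ▸ hxα)

theorem isClosed_pcell : IsClosed (pcell U p r α) := by
  simp only [pcell, ofPred_forall]
  exact isClosed_iInter fun u => isClosed_iInter fun _ => isClosed_le (by fun_prop) (by fun_prop)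

theorem exists_le_of_notMem_interior_pcell (hx : x ∉ interior (pcell U p r α)) :
    ∃ u ∈ U, dist x u ^ 2 - α ^ 2 ≤ dist x p ^ 2 - r ^ 2 := by
  by_contra! hlt
  have near : ∀ᶠ w in 𝓝 x, ∀ u ∈ U, dist w p ^ 2 - r ^ 2 < dist w u ^ 2 - α ^ 2 :=
    (U.eventually_all).2 fun u hu =>
      (by fun_prop : Continuous fun w => dist w p ^ 2 - r ^ 2).continuousAt.eventually_lt
        (by fun_prop : Continuous fun w => dist w u ^ 2 - α ^ 2).continuousAt (hlt u hu)
  exact hx (mem_interior_iff_mem_nhds.2 (near.mono fun w hw u hu => (hw u hu).le))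

theorem P0_subset_offsetU (hα : 0 ≤ α) : P0 U p r α ⊆ offsetU U α := by
  rintro x ⟨hxp, hxint⟩
  obtain ⟨u, hu, hpow⟩ := exists_le_of_notMem_interior_pcell hxint
  have hxp' : dist x p ^ 2 ≤ r ^ 2 := pow_le_pow_left₀ dist_nonneg (mem_closedBall.1 hxp) 2
  have hxu : dist x u ≤ α := (sq_le_sq₀ dist_nonneg hα).1 (by linarith)
  exact (infDist_le_dist_of_mem (Finset.mem_coe.2 hu)).trans hxu

theorem pcell_inter_closedBall_subset (hu : u ∈ U) (hr : 0 ≤ r) :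
    pcell U p r α ∩ closedBall u α ⊆ closedBall p r := by
  rintro z ⟨hzP, hzu⟩
  have hzu' : dist z u ^ 2 ≤ α ^ 2 := pow_le_pow_left₀ dist_nonneg (mem_closedBall.1 hzu) 2
  exact mem_closedBall.2 ((sq_le_sq₀ dist_nonneg hr).1 (by linarith [hzP u hu]))

end

theorem stmt4_general {k : ℕ} (U : Finset (EuclideanSpace ℝ (Fin k)))
    (p q : EuclideanSpace ℝ (Fin k)) (r : ℝ) (α : ℝ)
    (σ : Finset (EuclideanSpace ℝ (Fin k))) (hσU : σ ⊆ U) (hσ : σ.Nonempty)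
    (hL0 : (vcellInter U σ ∩ P0 U p r α).Nonempty)
    (hK : (vcellInter U σ ∩ offsetU U α ∩ closedBall p r ∩ closedBall q r).Nonempty) :
    (vcellInter U σ ∩ Z0 U p q r α).Nonempty := by
  obtain ⟨x, hxV, hxP0⟩ := hL0
  obtain ⟨y, ⟨⟨hyV, hyα⟩, hyp⟩, hyq⟩ := hK
  obtain ⟨u, hu⟩ := hσ
  set Z := pcell U p r α ∩ pcell U q r α
  by_cases hyZ : y ∉ interior Z
  · exact ⟨y, hyV, ⟨hyp, hyq⟩, hyZ⟩
  rw [not_not] at hyZ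
  have hxZ : x ∉ interior Z := fun hx => hxP0.2 (interior_mono inter_subset_left hx)
  -- `[y, x]` is connected and leaves the open set `int Z`, so it meets `closure (int Z) \ int Z`.
  obtain ⟨z, ⟨hzcl, hzyx⟩, hzint⟩ := not_subset.1 <|
    mt ((convex_segment y x).isPreconnected.subset_of_closure_inter_subset isOpen_interior
      ⟨y, left_mem_segment ℝ y x, hyZ⟩) (not_subset.2 ⟨x, right_mem_segment ℝ y x, hxZ⟩)
  have hzZ : z ∈ Z := (isClosed_pcell.inter isClosed_pcell).closure_interior_subset hzcl
  have hα : 0 ≤ α := infDist_nonneg.trans hyα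
  have hxα : x ∈ offsetU U α := P0_subset_offsetU hα hxP0
  have hz : z ∈ vcellInter U σ ∩ closedBall u α :=
    (convex_vcellInter.inter (convex_closedBall u α)).segment_subset
      ⟨hyV, vcellInter_inter_offsetU_subset_closedBall hσU hu ⟨hyV, hyα⟩⟩
      ⟨hxV, vcellInter_inter_offsetU_subset_closedBall hσU hu ⟨hxV, hxα⟩⟩ hzyx
  have hr : 0 ≤ r := dist_nonneg.trans hyp
  exact ⟨z, hz.1, ⟨pcell_inter_closedBall_subset (hσU hu) hr ⟨hzZ.1, hz.2⟩,
    pcell_inter_closedBall_subset (hσU hu) hr ⟨hzZ.2, hz.2⟩⟩, hzint⟩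

/-- Containment Lemma: if `V_σ` meets `P_0(α)` and `V_σ` meets
`U_α ∩ B_r(p) ∩ B_r(q)`, then `V_σ` meets `Z_0(α)`. -/
theorem stmt4 {k : ℕ} (U : Finset (EuclideanSpace ℝ (Fin k))) (hU : U.Nonempty)
    (p q : EuclideanSpace ℝ (Fin k)) (r : ℝ) (hr : 0 < r) (α : ℝ) (hα : 0 ≤ α)
    (hndp : p ∈ U → α < r) (hndq : q ∈ U → α < r)
    (σ : Finset (EuclideanSpace ℝ (Fin k))) (hσU : σ ⊆ U) (hσ : σ.Nonempty)
    (hL0 : (vcellInter U σ ∩ P0 U p r α).Nonempty)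
    (hK : (vcellInter U σ ∩ offsetU U α ∩ closedBall p r ∩ closedBall q r).Nonempty) :
    (vcellInter U σ ∩ Z0 U p q r α).Nonempty :=
  stmt4_general U p q r α σ hσU hσ hL0 hK
end
end

section
/- Nerve Subdivision minimizer property: assume that if p ∈ U then α < r. Let σ ⊆ U be nonempty with V_σ ∩ P_0(α) ≠ ∅. Then the compact set V_σ ∩ U_α ∩ B_r(p) is nonempty, and every point z minimizing the function x ↦ d_U(x)² − ‖x − p‖² over V_σ ∩ U_α ∩ B_r(p) belongs to P_0(α). -/
/-!
With `g x = d_U(x)² − ‖x − p‖²`, the power cell is the superlevel set `P(α) = {g ≥ α² − r²}`.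
A point of `V_σ ∩ P_0(α)` has `g ≤ α² − r²` and hence lies in `U_α`, so a minimizer `z` of `g`
also has `g z ≤ α² − r²`. On `V_σ` we have `g = ‖· − u‖² − ‖· − p‖²` for any `u ∈ σ`, which
strictly decreases in the direction `u − p`; so `z` cannot be an interior point of `P(α)`.
When `u = p` this direction degenerates, but then `g z = 0 > α² − r²` since `α < r`.
-/

open Metric Set

noncomputable section

open Filter Topology
open scoped RealInnerProductSpace

namespace NerveSubdivision

lemma dist_sq_sub_dist_sq_add_smul {k : ℕ} (z u p : EuclideanSpace ℝ (Fin k)) (t : ℝ) :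
    dist (z + t • (u - p)) u ^ 2 - dist (z + t • (u - p)) p ^ 2
      = dist z u ^ 2 - dist z p ^ 2 - 2 * t * ‖u - p‖ ^ 2 := by
  have hexpand : ∀ q : EuclideanSpace ℝ (Fin k),
      dist (z + t • (u - p)) q ^ 2
        = dist z q ^ 2 + 2 * (t * ⟪z - q, u - p⟫) + t ^ 2 * ‖u - p‖ ^ 2 := by
    intro q
    rw [dist_eq_norm, dist_eq_norm, add_sub_right_comm, norm_add_sq_real,
      real_inner_smul_right, norm_smul, Real.norm_eq_abs, mul_pow, sq_abs]
  have hinner : ⟪z - u, u - p⟫ - ⟪z - p, u - p⟫ = -‖u - p‖ ^ 2 := by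
    rw [← inner_sub_left, show z - u - (z - p) = -(u - p) by abel, inner_neg_left,
      real_inner_self_eq_norm_sq]
  rw [hexpand u, hexpand p]
  linear_combination (2 * t) * hinner

variable {k : ℕ} (U : Finset (EuclideanSpace ℝ (Fin k))) (p : EuclideanSpace ℝ (Fin k))

def powerGap (x : EuclideanSpace ℝ (Fin k)) : ℝ :=
  distU U x ^ 2 - dist x p ^ 2

lemma continuous_distU : Continuous (distU U) :=
  continuous_infDist_pt _

lemma continuous_powerGap : Continuous (powerGap U p) :=
  ((continuous_distU U).pow 2).sub ((continuous_id.dist continuous_const).pow 2)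

lemma distU_le_dist {x u : EuclideanSpace ℝ (Fin k)} (hu : u ∈ U) : distU U x ≤ dist x u :=
  infDist_le_dist_of_mem (Finset.mem_coe.mpr hu)

lemma distU_eq_dist_of_mem_vcell {x u : EuclideanSpace ℝ (Fin k)} (hu : u ∈ U)
    (hx : x ∈ vcell U u) : distU U x = dist x u :=
  le_antisymm (distU_le_dist U hu) <|
    (le_infDist ⟨u, Finset.mem_coe.mpr hu⟩).mpr fun u' hu' => hx u' hu'

lemma isClosed_vcellInter (σ : Finset (EuclideanSpace ℝ (Fin k))) :
    IsClosed (vcellInter U σ) :=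
  isClosed_biInter fun u _ => by
    simp only [vcell, ofPred_forall]
    exact isClosed_biInter fun u' _ =>
      isClosed_le (continuous_id.dist continuous_const) (continuous_id.dist continuous_const)

lemma isClosed_offsetU (α : ℝ) : IsClosed (offsetU U α) :=
  isClosed_le (continuous_distU U) continuous_const

variable {U p} {r α : ℝ}

lemma mem_pcell_of_le_powerGap {x : EuclideanSpace ℝ (Fin k)}
    (hx : α ^ 2 - r ^ 2 ≤ powerGap U p x) : x ∈ pcell U p r α := by
  intro u hu
  have hdist : distU U x ^ 2 ≤ dist x u ^ 2 :=
    pow_le_pow_left₀ infDist_nonneg (distU_le_dist U hu) 2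
  unfold powerGap at hx
  linarith

lemma powerGap_le_of_notMem_interior_pcell {x : EuclideanSpace ℝ (Fin k)}
    (hx : x ∉ interior (pcell U p r α)) : powerGap U p x ≤ α ^ 2 - r ^ 2 := by
  have hsub : {x | α ^ 2 - r ^ 2 < powerGap U p x} ⊆ interior (pcell U p r α) :=
    interior_maximal (fun _ hx => mem_pcell_of_le_powerGap hx.le)
      (isOpen_lt continuous_const (continuous_powerGap U p))
  exact not_lt.mp fun hlt => hx (hsub hlt)

lemma mem_offsetU_of_powerGap_le (hα : 0 ≤ α) {x : EuclideanSpace ℝ (Fin k)}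
    (hxB : x ∈ closedBall p r) (hx : powerGap U p x ≤ α ^ 2 - r ^ 2) : x ∈ offsetU U α := by
  have hxp : dist x p ≤ r := mem_closedBall.mp hxB
  have hsq : distU U x ^ 2 ≤ α ^ 2 := by
    unfold powerGap at hx
    nlinarith [dist_nonneg (x := x) (y := p)]
  exact (pow_le_pow_iff_left₀ infDist_nonneg hα two_ne_zero).mp hsq

lemma lt_powerGap_of_mem_interior_pcell {z u : EuclideanSpace ℝ (Fin k)} (hu : u ∈ U)
    (hzV : z ∈ vcell U u) (hup : u ≠ p) (hz : z ∈ interior (pcell U p r α)) :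
    α ^ 2 - r ^ 2 < powerGap U p z := by
  have hpath : Tendsto (fun t : ℝ => z + t • (u - p)) (𝓝[>] 0) (𝓝 z) := by
    have hcont : Continuous fun t : ℝ => z + t • (u - p) := by fun_prop
    simpa using (hcont.tendsto 0).mono_left nhdsWithin_le_nhds
  obtain ⟨t, hwP, ht : 0 < t⟩ :=
    ((hpath.eventually (isOpen_interior.mem_nhds hz)).and self_mem_nhdsWithin).exists
  have hwP' := interior_subset hwP u hu
  have hdecrease : 0 < 2 * t * ‖u - p‖ ^ 2 := by
    have : 0 < ‖u - p‖ := norm_pos_iff.mpr (sub_ne_zero_of_ne hup)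
    positivity
  have hgap := dist_sq_sub_dist_sq_add_smul z u p t
  rw [powerGap, distU_eq_dist_of_mem_vcell U hu hzV]
  linarith

lemma notMem_interior_pcell_of_powerGap_le (hα : 0 ≤ α) {z u : EuclideanSpace ℝ (Fin k)}
    (hu : u ∈ U) (hzV : z ∈ vcell U u) (hndp : p ∈ U → α < r)
    (hz : powerGap U p z ≤ α ^ 2 - r ^ 2) : z ∉ interior (pcell U p r α) := by
  intro hint
  by_cases hup : u = p
  · subst hup
    have hαr : α ^ 2 < r ^ 2 := by nlinarith [hndp hu]
    rw [powerGap, distU_eq_dist_of_mem_vcell U hu hzV] at hz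
    linarith
  · exact absurd hz (not_le.mpr (lt_powerGap_of_mem_interior_pcell hu hzV hup hint))

end NerveSubdivision

open NerveSubdivision

theorem stmt7_general {k : ℕ} (U : Finset (EuclideanSpace ℝ (Fin k)))
    (p : EuclideanSpace ℝ (Fin k)) (r : ℝ) (α : ℝ) (hα : 0 ≤ α)
    (hndp : p ∈ U → α < r)
    (σ : Finset (EuclideanSpace ℝ (Fin k))) (hσU : σ ⊆ U) (hσ : σ.Nonempty)
    (hL0 : (vcellInter U σ ∩ P0 U p r α).Nonempty) :
    (vcellInter U σ ∩ offsetU U α ∩ closedBall p r).Nonempty ∧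
    IsCompact (vcellInter U σ ∩ offsetU U α ∩ closedBall p r) ∧
    ∀ z ∈ vcellInter U σ ∩ offsetU U α ∩ closedBall p r,
      (∀ x ∈ vcellInter U σ ∩ offsetU U α ∩ closedBall p r,
        distU U z ^ 2 - dist z p ^ 2 ≤ distU U x ^ 2 - dist x p ^ 2) →
      z ∈ P0 U p r α := by
  obtain ⟨y, hyV, hyB, hyI⟩ := hL0
  have hgy := powerGap_le_of_notMem_interior_pcell hyI
  have hyK : y ∈ vcellInter U σ ∩ offsetU U α ∩ closedBall p r :=
    ⟨⟨hyV, mem_offsetU_of_powerGap_le hα hyB hgy⟩, hyB⟩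
  refine ⟨⟨y, hyK⟩,
    (isCompact_closedBall p r).inter_left ((isClosed_vcellInter U σ).inter (isClosed_offsetU U α)),
    fun z hz hmin => ⟨hz.2, ?_⟩⟩
  obtain ⟨u, hu⟩ := hσ
  exact notMem_interior_pcell_of_powerGap_le hα (hσU hu) (mem_iInter₂.mp hz.1.1 u hu) hndp
    ((hmin y hyK).trans hgy)

/-- Nerve Subdivision minimizer property: if `V_σ` meets `P_0(α)`, then
`V_σ ∩ U_α ∩ B_r(p)` is a nonempty compact set, and every minimizer of
`x ↦ d_U(x)² − ‖x − p‖²` over it lies in `P_0(α)`. -/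
theorem stmt7 {k : ℕ} (U : Finset (EuclideanSpace ℝ (Fin k))) (hU : U.Nonempty)
    (p : EuclideanSpace ℝ (Fin k)) (r : ℝ) (hr : 0 < r) (α : ℝ) (hα : 0 ≤ α)
    (hndp : p ∈ U → α < r)
    (σ : Finset (EuclideanSpace ℝ (Fin k))) (hσU : σ ⊆ U) (hσ : σ.Nonempty)
    (hL0 : (vcellInter U σ ∩ P0 U p r α).Nonempty) :
    (vcellInter U σ ∩ offsetU U α ∩ closedBall p r).Nonempty ∧
    IsCompact (vcellInter U σ ∩ offsetU U α ∩ closedBall p r) ∧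
    ∀ z ∈ vcellInter U σ ∩ offsetU U α ∩ closedBall p r,
      (∀ x ∈ vcellInter U σ ∩ offsetU U α ∩ closedBall p r,
        distU U z ^ 2 - dist z p ^ 2 ≤ distU U x ^ 2 - dist x p ^ 2) →
      z ∈ P0 U p r α :=
  stmt7_general U p r α hα hndp σ hσU hσ hL0
end
end

section
/- Intersection Nerve Subdivision minimizer property: assume the nondegeneracy condition. Let σ ⊆ U be nonempty with V_σ ∩ Z_0(α) ≠ ∅. Then the compact set V_σ ∩ U_α ∩ B_r(p) ∩ B_r(q) is nonempty, and every point z minimizing the function x ↦ min{ d_U(x)² − ‖x − p‖², d_U(x)² − ‖x − q‖² } over V_σ ∩ U_α ∩ B_r(p) ∩ B_r(q) belongs to Z_0(α). -/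
open Metric Set

noncomputable section

/-! With `f x = min (d_U(x)² - ‖x - p‖²) (d_U(x)² - ‖x - q‖²)`, the cells satisfy
`P(α) ∩ Q(α) = {f ≥ α² - r²}`. On the level set `f = α² - r²` the nearest site `u` of the point
differs from `p` (resp. `q`) by nondegeneracy, so `‖· - u‖² - ‖· - p‖²` is a nonconstant affine
function and the level set misses the interior of the cells. Hence, inside the lens
`B_r(p) ∩ B_r(q)`, `Z_0(α)` is the sublevel set `{f ≤ α² - r²}`: it contains every minimizer once
it meets the domain, and its points in the lens lie in `U_α`. -/

open Filter Topology

lemma dist_sq_sub_dist_sq_add_smul {E : Type*} [NormedAddCommGroup E] [InnerProductSpace ℝ E]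
    (x u p : E) (t : ℝ) :
    dist (x + t • (u - p)) u ^ 2 - dist (x + t • (u - p)) p ^ 2 =
      dist x u ^ 2 - dist x p ^ 2 - 2 * t * ‖u - p‖ ^ 2 := by
  have hdiff : (x - u) - (x - p) = -(u - p) := by abel
  have hinner : inner ℝ (x - u) (u - p) - inner ℝ (x - p) (u - p) = -‖u - p‖ ^ 2 := by
    rw [← inner_sub_left, hdiff, inner_neg_left, real_inner_self_eq_norm_sq]
  simp only [dist_eq_norm, add_sub_right_comm x, norm_add_sq_real, real_inner_smul_right]
  linear_combination (2 * t) * hinner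

lemma notMem_interior_setOf_le_dist_sq_sub_dist_sq {E : Type*} [NormedAddCommGroup E]
    [InnerProductSpace ℝ E] {u p : E} (hup : u ≠ p) (x : E) :
    x ∉ interior {y | dist x u ^ 2 - dist x p ^ 2 ≤ dist y u ^ 2 - dist y p ^ 2} := by
  intro hx
  have hpath : Tendsto (fun t : ℝ => x + t • (u - p)) (𝓝[>] 0) (𝓝 x) :=
    tendsto_nhdsWithin_of_tendsto_nhds <|
      (by fun_prop : Continuous fun t : ℝ => x + t • (u - p)).tendsto' 0 x (by simp)
  obtain ⟨t, hmem, ht⟩ :=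
    ((hpath.eventually (mem_interior_iff_mem_nhds.mp hx)).and self_mem_nhdsWithin).exists
  rw [dist_sq_sub_dist_sq_add_smul] at hmem
  have : 0 < t * ‖u - p‖ ^ 2 :=
    mul_pos ht (pow_pos (norm_pos_iff.mpr (sub_ne_zero.mpr hup)) 2)
  linarith

section PowerCells

variable {k : ℕ} {U : Finset (EuclideanSpace ℝ (Fin k))}

lemma exists_mem_distU_eq (hU : U.Nonempty) (x : EuclideanSpace ℝ (Fin k)) :
    ∃ u ∈ U, distU U x = dist x u :=
  U.finite_toSet.isCompact.exists_infDist_eq_dist (Finset.coe_nonempty.mpr hU) x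

lemma distU_le_dist {u : EuclideanSpace ℝ (Fin k)} (hu : u ∈ U) (x : EuclideanSpace ℝ (Fin k)) :
    distU U x ≤ dist x u :=
  infDist_le_dist_of_mem (Finset.mem_coe.mpr hu)

lemma continuous_distU : Continuous (distU U) :=
  continuous_infDist_pt _

lemma isClosed_offsetU (α : ℝ) : IsClosed (offsetU U α) :=
  isClosed_le continuous_distU continuous_const

lemma isClosed_vcellInter (σ : Finset (EuclideanSpace ℝ (Fin k))) :
    IsClosed (vcellInter U σ) := by
  refine isClosed_biInter fun u _ => ?_
  have hcell : vcell U u = ⋂ u' ∈ U, {x | dist x u ≤ dist x u'} := by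
    ext x; simp [vcell]
  rw [hcell]
  exact isClosed_biInter fun u' _ =>
    isClosed_le (continuous_id.dist continuous_const) (continuous_id.dist continuous_const)

lemma mem_pcell_iff (hU : U.Nonempty) {p x : EuclideanSpace ℝ (Fin k)} {r α : ℝ} :
    x ∈ pcell U p r α ↔ α ^ 2 - r ^ 2 ≤ distU U x ^ 2 - dist x p ^ 2 := by
  constructor
  · intro hx
    obtain ⟨u, hu, hdist⟩ := exists_mem_distU_eq hU x
    have := hx u hu
    rw [hdist]
    linarith
  · intro hx u hu
    have : distU U x ^ 2 ≤ dist x u ^ 2 := pow_le_pow_left₀ infDist_nonneg (distU_le_dist hu x) 2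
    linarith

/-- The power cell lies in the half-space `{y | ‖y - p‖² - r² ≤ ‖y - u‖² - α²}` of a nearest
site `u ≠ p` of `x`, and `x` lies on its boundary. -/
lemma notMem_interior_pcell (hU : U.Nonempty) {p x : EuclideanSpace ℝ (Fin k)} {r α : ℝ}
    (hr : 0 < r) (hα : 0 ≤ α) (hnd : p ∈ U → α < r)
    (hx : distU U x ^ 2 - dist x p ^ 2 = α ^ 2 - r ^ 2) :
    x ∉ interior (pcell U p r α) := by
  obtain ⟨u, hu, hdist⟩ := exists_mem_distU_eq hU x
  rw [hdist] at hx
  have hup : u ≠ p := by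
    rintro rfl
    have := hnd hu
    nlinarith
  refine fun hint => notMem_interior_setOf_le_dist_sq_sub_dist_sq hup x
    (interior_mono (fun y hy => ?_) hint)
  have := hy u hu
  show dist x u ^ 2 - dist x p ^ 2 ≤ dist y u ^ 2 - dist y p ^ 2
  linarith

variable {p q : EuclideanSpace ℝ (Fin k)} {r α : ℝ}

lemma continuous_min_distU_sq_sub_dist_sq :
    Continuous fun x => min (distU U x ^ 2 - dist x p ^ 2) (distU U x ^ 2 - dist x q ^ 2) := by
  have hpow (c : EuclideanSpace ℝ (Fin k)) :
      Continuous fun x => distU U x ^ 2 - dist x c ^ 2 :=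
    (continuous_distU.pow 2).sub ((continuous_id.dist continuous_const).pow 2)
  exact (hpow p).min (hpow q)

lemma mem_interior_pcell_inter_of_lt (hU : U.Nonempty) {x : EuclideanSpace ℝ (Fin k)}
    (hx : α ^ 2 - r ^ 2 < min (distU U x ^ 2 - dist x p ^ 2) (distU U x ^ 2 - dist x q ^ 2)) :
    x ∈ interior (pcell U p r α ∩ pcell U q r α) := by
  refine interior_maximal (fun y hy => ?_)
    (isOpen_lt continuous_const continuous_min_distU_sq_sub_dist_sq) hx
  rw [mem_ofPred_eq, lt_min_iff] at hy
  exact ⟨(mem_pcell_iff hU).mpr hy.1.le, (mem_pcell_iff hU).mpr hy.2.le⟩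

lemma mem_Z0_iff (hU : U.Nonempty) (hr : 0 < r) (hα : 0 ≤ α)
    (hndp : p ∈ U → α < r) (hndq : q ∈ U → α < r) {x : EuclideanSpace ℝ (Fin k)} :
    x ∈ Z0 U p q r α ↔ x ∈ closedBall p r ∩ closedBall q r ∧
      min (distU U x ^ 2 - dist x p ^ 2) (distU U x ^ 2 - dist x q ^ 2) ≤ α ^ 2 - r ^ 2 := by
  refine and_congr_right fun _ => ⟨fun hx => not_lt.mp fun hlt =>
    hx (mem_interior_pcell_inter_of_lt hU hlt), fun hle hint => ?_⟩
  have hcell := interior_subset hint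
  have heq := le_antisymm hle
    (le_min ((mem_pcell_iff hU).mp hcell.1) ((mem_pcell_iff hU).mp hcell.2))
  rcases min_eq_iff.mp heq with ⟨hp, -⟩ | ⟨hq, -⟩
  · exact notMem_interior_pcell hU hr hα hndp hp (interior_mono inter_subset_left hint)
  · exact notMem_interior_pcell hU hr hα hndq hq (interior_mono inter_subset_right hint)

lemma mem_offsetU_of_min_le (hα : 0 ≤ α) {x : EuclideanSpace ℝ (Fin k)}
    (hxp : x ∈ closedBall p r) (hxq : x ∈ closedBall q r)
    (hx : min (distU U x ^ 2 - dist x p ^ 2) (distU U x ^ 2 - dist x q ^ 2) ≤ α ^ 2 - r ^ 2) :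
    x ∈ offsetU U α := by
  have hsq : distU U x ^ 2 ≤ α ^ 2 := by
    rcases min_le_iff.mp hx with h | h
    · nlinarith [mem_closedBall.mp hxp, dist_nonneg (x := x) (y := p)]
    · nlinarith [mem_closedBall.mp hxq, dist_nonneg (x := x) (y := q)]
  exact (sq_le_sq₀ infDist_nonneg hα).mp hsq

end PowerCells

theorem stmt8_general {k : ℕ} (U : Finset (EuclideanSpace ℝ (Fin k))) (hU : U.Nonempty)
    (p q : EuclideanSpace ℝ (Fin k)) (r : ℝ) (hr : 0 < r) (α : ℝ) (hα : 0 ≤ α)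
    (hndp : p ∈ U → α < r) (hndq : q ∈ U → α < r)
    (σ : Finset (EuclideanSpace ℝ (Fin k)))
    (hK0 : (vcellInter U σ ∩ Z0 U p q r α).Nonempty) :
    (vcellInter U σ ∩ offsetU U α ∩ closedBall p r ∩ closedBall q r).Nonempty ∧
    IsCompact (vcellInter U σ ∩ offsetU U α ∩ closedBall p r ∩ closedBall q r) ∧
    ∀ z ∈ vcellInter U σ ∩ offsetU U α ∩ closedBall p r ∩ closedBall q r,
      (∀ x ∈ vcellInter U σ ∩ offsetU U α ∩ closedBall p r ∩ closedBall q r,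
        min (distU U z ^ 2 - dist z p ^ 2) (distU U z ^ 2 - dist z q ^ 2) ≤
          min (distU U x ^ 2 - dist x p ^ 2) (distU U x ^ 2 - dist x q ^ 2)) →
      z ∈ Z0 U p q r α := by
  obtain ⟨w, hwV, hwZ⟩ := hK0
  obtain ⟨⟨hwp, hwq⟩, hfw⟩ := (mem_Z0_iff hU hr hα hndp hndq).mp hwZ
  have hwK : w ∈ vcellInter U σ ∩ offsetU U α ∩ closedBall p r ∩ closedBall q r :=
    ⟨⟨⟨hwV, mem_offsetU_of_min_le hα hwp hwq hfw⟩, hwp⟩, hwq⟩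
  refine ⟨⟨w, hwK⟩, ?_, fun z hz hmin => ?_⟩
  · exact ((isCompact_closedBall p r).inter_left
      ((isClosed_vcellInter σ).inter (isClosed_offsetU α))).inter_right isClosed_closedBall
  · exact (mem_Z0_iff hU hr hα hndp hndq).mpr ⟨⟨hz.1.2, hz.2⟩, (hmin w hwK).trans hfw⟩

/-- Intersection Nerve Subdivision minimizer property: if `V_σ` meets
`Z_0(α)`, then `V_σ ∩ U_α ∩ B_r(p) ∩ B_r(q)` is a nonempty compact set, and every
minimizer of `x ↦ min{d_U(x)² − ‖x − p‖², d_U(x)² − ‖x − q‖²}` over it lies in `Z_0(α)`. -/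
theorem stmt8 {k : ℕ} (U : Finset (EuclideanSpace ℝ (Fin k))) (hU : U.Nonempty)
    (p q : EuclideanSpace ℝ (Fin k)) (r : ℝ) (hr : 0 < r) (α : ℝ) (hα : 0 ≤ α)
    (hndp : p ∈ U → α < r) (hndq : q ∈ U → α < r)
    (σ : Finset (EuclideanSpace ℝ (Fin k))) (hσU : σ ⊆ U) (hσ : σ.Nonempty)
    (hK0 : (vcellInter U σ ∩ Z0 U p q r α).Nonempty) :
    (vcellInter U σ ∩ offsetU U α ∩ closedBall p r ∩ closedBall q r).Nonempty ∧
    IsCompact (vcellInter U σ ∩ offsetU U α ∩ closedBall p r ∩ closedBall q r) ∧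
    ∀ z ∈ vcellInter U σ ∩ offsetU U α ∩ closedBall p r ∩ closedBall q r,
      (∀ x ∈ vcellInter U σ ∩ offsetU U α ∩ closedBall p r ∩ closedBall q r,
        min (distU U z ^ 2 - dist z p ^ 2) (distU U z ^ 2 - dist z q ^ 2) ≤
          min (distU U x ^ 2 - dist x p ^ 2) (distU U x ^ 2 - dist x q ^ 2)) →
      z ∈ Z0 U p q r α :=
  stmt8_general U hU p q r hr α hα hndp hndq σ hK0
end
end

section
/- Local Probabilistic Sampling Theorem (density form): let X ⊆ ℝ^N be a nonempty compact set, let μ be a Borel probability measure on ℝ^N with μ(X) = 1, let ρ > 0, and set v = inf_{x ∈ X} μ(B̄_{ρ/24}(x)), where B̄_s(x) is the closed ball of radius s about x. Assume v > 0 and fix ξ ∈ (0,1). If x_1, …, x_n are independent random points each with law μ and n ≥ (1/v)(log(1/v) + log(1/ξ)), then with probability at least 1 − ξ the sample {x_1, …, x_n} is contained in X and every point of X lies within distance ρ/3 of some x_j; in particular the Hausdorff distance between {x_1, …, x_n} and X is at most ρ/3. -/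
/-!
With `r = ρ / 24`, a maximal `2r`-separated subset `S` of the compact set `X` is finite and is a
`2r`-net of `X`; the balls `B̄_r(c)`, `c ∈ S`, are disjoint and each has mass at least `v`, so
`|S| ≤ 1 / v`. All `n` samples miss a given ball with probability at most
`(1 - v)ⁿ ≤ e^{-vn} ≤ v ξ`, so by the union bound, outside an event of probability at most `ξ`,
every ball around a point of `S` contains a sample, and then every point of `X` is within
`2r + r ≤ ρ / 3` of a sample. Since `μ(X) = 1`, the samples lie in `X` almost surely.
-/

open MeasureTheory ProbabilityTheory Metric
open scoped ENNReal NNReal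

section Packing

variable {E : Type*} [PseudoMetricSpace E]

lemma Metric.IsSeparated.pairwiseDisjoint_closedBall {r : ℝ≥0} {S : Set E}
    (hS : IsSeparated ((2 * r : ℝ≥0) : ℝ≥0∞) S) : S.PairwiseDisjoint (closedBall · r) := by
  intro a ha b hb hab
  have hsep : ((2 * r : ℝ≥0) : ℝ≥0∞) < edist a b := hS ha hb hab
  rw [edist_nndist, ENNReal.coe_lt_coe, ← NNReal.coe_lt_coe, coe_nndist] at hsep
  exact closedBall_disjoint_closedBall (by push_cast at hsep; linarith)

variable [MeasurableSpace E] [OpensMeasurableSpace E] {μ : Measure E}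

lemma Metric.IsSeparated.card_mul_le_measure_univ {r : ℝ≥0} {S : Finset E} {m : ℝ≥0∞}
    (hS : IsSeparated ((2 * r : ℝ≥0) : ℝ≥0∞) (S : Set E))
    (hm : ∀ c ∈ S, m ≤ μ (closedBall c r)) :
    (S.card : ℝ≥0∞) * m ≤ μ Set.univ :=
  calc (S.card : ℝ≥0∞) * m = ∑ _c ∈ S, m := by rw [Finset.sum_const, nsmul_eq_mul]
    _ ≤ ∑ c ∈ S, μ (closedBall c r) := Finset.sum_le_sum hm
    _ = μ (⋃ c ∈ S, closedBall c r) :=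
      (measure_biUnion_finset hS.pairwiseDisjoint_closedBall
        fun _ _ => measurableSet_closedBall).symm
    _ ≤ μ Set.univ := measure_mono (Set.subset_univ _)

theorem IsCompact.exists_finset_net_card_mul_le_measure_univ {X : Set E} (hX : IsCompact X)
    {r : ℝ} (hr : 0 < r) {m : ℝ≥0∞} (hm : ∀ c ∈ X, m ≤ μ (closedBall c r)) :
    ∃ S : Finset E, ↑S ⊆ X ∧ (∀ y ∈ X, ∃ c ∈ S, dist y c ≤ 2 * r) ∧
      (S.card : ℝ≥0∞) * m ≤ μ Set.univ := by
  lift r to ℝ≥0 using hr.le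
  have hpack : packingNumber (2 * r) X ≠ ⊤ := by
    obtain ⟨N, -, hNfin, hNcov⟩ := exists_finite_isCover_of_isCompact (ne_of_gt hr) hX
    exact ((packingNumber_two_mul_le_externalCoveringNumber r X).trans
      hNcov.externalCoveringNumber_le_encard).trans_lt hNfin.encard_lt_top |>.ne
  have hfin : (maximalSeparatedSet (2 * r) X).Finite := by
    rw [← Set.encard_ne_top_iff, encard_maximalSeparatedSet hpack]
    exact hpack
  refine ⟨hfin.toFinset, by simpa using maximalSeparatedSet_subset, fun y hy => ?_, ?_⟩
  · obtain ⟨c, hc, hyc⟩ := (isCover_maximalSeparatedSet hpack).subset_iUnion_closedBall hy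
      |> Set.mem_iUnion₂.mp
    exact ⟨c, by simpa using hc, by simpa using hyc⟩
  · refine IsSeparated.card_mul_le_measure_univ ?_
      fun c hc => hm c (maximalSeparatedSet_subset (by simpa using hc))
    simpa only [Set.Finite.coe_toFinset] using isSeparated_maximalSeparatedSet

end Packing

section Sampling

variable {Ω E ι : Type*} [MeasurableSpace Ω] [MeasurableSpace E] [Fintype ι]
  {P : Measure Ω} {μ : Measure E} {x : ι → Ω → E}

lemma ofReal_one_sub_le_prob_compl [IsProbabilityMeasure P] {s : Set Ω} {ξ : ℝ} (hξ : 0 ≤ ξ)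
    (hs : P s ≤ ENNReal.ofReal ξ) : ENNReal.ofReal (1 - ξ) ≤ P sᶜ := by
  rw [ENNReal.ofReal_sub _ hξ, ENNReal.ofReal_one, tsub_le_iff_right, ← measure_univ (μ := P)]
  exact (measure_univ_le_add_compl s).trans (by rw [add_comm]; gcongr)

lemma ProbabilityTheory.iIndepFun.measure_iInter_preimage_eq_pow (hindep : iIndepFun x P)
    (hlaw : ∀ j, P.map (x j) = μ) (hmeas : ∀ j, Measurable (x j)) {s : Set E}
    (hs : MeasurableSet s) :
    P (⋂ j, x j ⁻¹' s) = μ s ^ Fintype.card ι := by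
  rw [hindep.meas_iInter fun j => ⟨s, hs, rfl⟩, ← Finset.card_univ, ← Finset.prod_const]
  exact Finset.prod_congr rfl fun j _ => by rw [← hlaw j, Measure.map_apply (hmeas j) hs]

lemma ProbabilityTheory.iIndepFun.measure_biUnion_iInter_preimage_compl_le
    [IsProbabilityMeasure μ] (hindep : iIndepFun x P) (hlaw : ∀ j, P.map (x j) = μ)
    (hmeas : ∀ j, Measurable (x j))
    {α : Type*} (S : Finset α) {B : α → Set E} (hB : ∀ c ∈ S, MeasurableSet (B c)) {m : ℝ≥0∞}
    (hm : ∀ c ∈ S, m ≤ μ (B c)) :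
    P (⋃ c ∈ S, ⋂ j, x j ⁻¹' (B c)ᶜ) ≤ S.card * (1 - m) ^ Fintype.card ι :=
  calc P (⋃ c ∈ S, ⋂ j, x j ⁻¹' (B c)ᶜ) ≤ ∑ c ∈ S, P (⋂ j, x j ⁻¹' (B c)ᶜ) :=
        measure_biUnion_finset_le S _
    _ ≤ ∑ _c ∈ S, (1 - m) ^ Fintype.card ι := Finset.sum_le_sum fun c hc => by
        rw [hindep.measure_iInter_preimage_eq_pow hlaw hmeas (hB c hc).compl,
          prob_compl_eq_one_sub (hB c hc)]
        gcongr
        exact hm c hc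
    _ = S.card * (1 - m) ^ Fintype.card ι := by rw [Finset.sum_const, nsmul_eq_mul]

end Sampling

lemma ENNReal.one_sub_ofReal_pow_le {v : ℝ} (hv : 0 ≤ v) (n : ℕ) :
    (1 - ENNReal.ofReal v) ^ n ≤ ENNReal.ofReal (Real.exp (-(v * n))) := by
  have h : 1 - ENNReal.ofReal v ≤ ENNReal.ofReal (Real.exp (-v)) := by
    rw [tsub_le_iff_right, ← ENNReal.ofReal_add (Real.exp_pos _).le hv, ← ENNReal.ofReal_one]
    exact ENNReal.ofReal_le_ofReal (by linarith [Real.add_one_le_exp (-v)])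
  calc (1 - ENNReal.ofReal v) ^ n ≤ ENNReal.ofReal (Real.exp (-v)) ^ n := by gcongr
    _ = ENNReal.ofReal (Real.exp (-(v * n))) := by
      rw [← ENNReal.ofReal_pow (Real.exp_pos _).le, ← Real.exp_nat_mul]
      ring_nf

lemma ENNReal.mul_one_sub_ofReal_pow_le {k : ℝ≥0∞} {v ξ : ℝ} (hk : k * ENNReal.ofReal v ≤ 1)
    (hv : 0 < v) (hξ : 0 < ξ) {n : ℕ}
    (hn : (1 / v) * (Real.log (1 / v) + Real.log (1 / ξ)) ≤ n) :
    k * (1 - ENNReal.ofReal v) ^ n ≤ ENNReal.ofReal ξ := by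
  have hexp : Real.exp (-(v * n)) ≤ v * ξ := by
    rw [← Real.exp_log (_root_.mul_pos hv hξ), Real.exp_le_exp, Real.log_mul hv.ne' hξ.ne']
    rw [one_div, one_div, Real.log_inv, Real.log_inv, inv_mul_le_iff₀ hv] at hn
    linarith
  calc k * (1 - ENNReal.ofReal v) ^ n ≤ k * ENNReal.ofReal (v * ξ) := by
        gcongr
        exact (one_sub_ofReal_pow_le hv.le n).trans (ENNReal.ofReal_le_ofReal hexp)
    _ = k * ENNReal.ofReal v * ENNReal.ofReal ξ := by rw [ENNReal.ofReal_mul hv.le, mul_assoc]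
    _ ≤ ENNReal.ofReal ξ := mul_le_of_le_one_left' hk

lemma ENNReal.ofReal_sInf_toReal_image_le {α : Type*} {f : α → ℝ≥0∞} {s : Set α} {a : α}
    (ha : a ∈ s) : ENNReal.ofReal (sInf ((fun a => (f a).toReal) '' s)) ≤ f a :=
  ENNReal.ofReal_le_of_le_toReal <|
    csInf_le ⟨0, by rintro _ ⟨b, -, rfl⟩; exact ENNReal.toReal_nonneg⟩ ⟨a, ha, rfl⟩

section Cover

variable {E ι : Type*} [PseudoMetricSpace E] {X S : Set E} {p : ι → E} {a b : ℝ}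

lemma forall_exists_dist_le_add_of_net (hS : ∀ y ∈ X, ∃ c ∈ S, dist y c ≤ a)
    (hp : ∀ c ∈ S, ∃ j, p j ∈ closedBall c b) : ∀ y ∈ X, ∃ j, dist y (p j) ≤ a + b := by
  intro y hy
  obtain ⟨c, hc, hyc⟩ := hS y hy
  obtain ⟨j, hj⟩ := hp c hc
  exact ⟨j, (dist_triangle_right y (p j) c).trans (add_le_add hyc (mem_closedBall.mp hj))⟩

lemma hausdorffDist_range_le (hpX : ∀ j, p j ∈ X) (ha : 0 ≤ a)
    (hcov : ∀ y ∈ X, ∃ j, dist y (p j) ≤ a) : hausdorffDist (Set.range p) X ≤ a := by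
  refine hausdorffDist_le_of_mem_dist ha ?_ fun y hy => ?_
  · rintro _ ⟨j, rfl⟩
    exact ⟨p j, hpX j, by rwa [dist_self]⟩
  · obtain ⟨j, hj⟩ := hcov y hy
    exact ⟨p j, Set.mem_range_self j, hj⟩

end Cover

theorem stmt11_general {N : ℕ} {Ω : Type*} [MeasurableSpace Ω]
    (P : Measure Ω) [IsProbabilityMeasure P]
    (X : Set (EuclideanSpace ℝ (Fin N))) (hXc : IsCompact X)
    (μ : Measure (EuclideanSpace ℝ (Fin N))) [IsProbabilityMeasure μ] (hμX : μ X = 1)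
    (ρ : ℝ) (hρ : 0 < ρ) (v : ℝ)
    (hv : v = sInf ((fun x => (μ (closedBall x (ρ / 24))).toReal) '' X))
    (hvpos : 0 < v)
    (ξ : ℝ) (hξ0 : 0 < ξ)
    (n : ℕ) (x : Fin n → Ω → EuclideanSpace ℝ (Fin N)) (hmeas : ∀ j, Measurable (x j))
    (hindep : iIndepFun x P)
    (hlaw : ∀ j, Measure.map (x j) P = μ)
    (hn : (1 / v) * (Real.log (1 / v) + Real.log (1 / ξ)) ≤ (n : ℝ)) :
    ENNReal.ofReal (1 - ξ) ≤
      P {ω | (∀ j, x j ω ∈ X) ∧ (∀ y ∈ X, ∃ j, dist y (x j ω) ≤ ρ / 3) ∧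
             hausdorffDist (Set.range fun j => x j ω) X ≤ ρ / 3} := by
  have hball (c) (hc : c ∈ X) : ENNReal.ofReal v ≤ μ (closedBall c (ρ / 24)) :=
    hv ▸ ENNReal.ofReal_sInf_toReal_image_le hc
  obtain ⟨S, hSX, hSnet, hScard⟩ := hXc.exists_finset_net_card_mul_le_measure_univ
    (by positivity) hball
  set missed := ⋃ c ∈ S, ⋂ j, x j ⁻¹' (closedBall c (ρ / 24))ᶜ
  have hmissed : P missed ≤ ENNReal.ofReal ξ := by
    refine (hindep.measure_biUnion_iInter_preimage_compl_le hlaw hmeas S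
      (fun _ _ => measurableSet_closedBall) fun c hc => hball c (hSX hc)).trans ?_
    rw [Fintype.card_fin]
    exact ENNReal.mul_one_sub_ofReal_pow_le (hScard.trans_eq measure_univ) hvpos hξ0 hn
  have hsampleX : ∀ᵐ ω ∂P, ∀ j, x j ω ∈ X := ae_all_iff.2 fun j =>
    ae_of_ae_map (hmeas j).aemeasurable <| by
      rw [hlaw j]
      exact (mem_ae_iff_prob_eq_one hXc.isClosed.measurableSet).2 hμX
  calc ENNReal.ofReal (1 - ξ) ≤ P missedᶜ := ofReal_one_sub_le_prob_compl hξ0.le hmissed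
    _ ≤ _ := measure_mono_ae <| by
      filter_upwards [hsampleX] with ω hωX (hω : ω ∉ missed)
      have hhit : ∀ c ∈ (S : Set _), ∃ j, x j ω ∈ closedBall c (ρ / 24) := by
        simpa [missed] using hω
      have hcov : ∀ y ∈ X, ∃ j, dist y (x j ω) ≤ ρ / 3 := fun y hy =>
        (forall_exists_dist_le_add_of_net hSnet hhit y hy).imp fun _ h => h.trans (by linarith)
      exact ⟨hωX, hcov, hausdorffDist_range_le hωX (by positivity) hcov⟩

/-- Local Probabilistic Sampling Theorem, density form: let `X ⊆ ℝ^N` be a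
nonempty compact set, `μ` a Borel probability measure with `μ(X) = 1`, `ρ > 0`, and
`v = inf_{x ∈ X} μ(B̄_{ρ/24}(x)) > 0`.  If `x_1, …, x_n` are independent random points
with law `μ` and `n ≥ (1/v)(log(1/v) + log(1/ξ))`, then with probability at least `1 − ξ`
the sample lies in `X`, every point of `X` is within `ρ/3` of a sample point, and the
Hausdorff distance between the sample and `X` is at most `ρ/3`. -/
theorem stmt11 {N : ℕ} {Ω : Type*} [MeasurableSpace Ω]
    (P : Measure Ω) [IsProbabilityMeasure P]
    (X : Set (EuclideanSpace ℝ (Fin N))) (hXne : X.Nonempty) (hXc : IsCompact X)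
    (μ : Measure (EuclideanSpace ℝ (Fin N))) [IsProbabilityMeasure μ] (hμX : μ X = 1)
    (ρ : ℝ) (hρ : 0 < ρ) (v : ℝ)
    (hv : v = sInf ((fun x => (μ (closedBall x (ρ / 24))).toReal) '' X))
    (hvpos : 0 < v)
    (ξ : ℝ) (hξ0 : 0 < ξ) (hξ1 : ξ < 1)
    (n : ℕ) (x : Fin n → Ω → EuclideanSpace ℝ (Fin N)) (hmeas : ∀ j, Measurable (x j))
    (hindep : iIndepFun x P)
    (hlaw : ∀ j, Measure.map (x j) P = μ)
    (hn : (1 / v) * (Real.log (1 / v) + Real.log (1 / ξ)) ≤ (n : ℝ)) :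
    ENNReal.ofReal (1 - ξ) ≤
      P {ω | (∀ j, x j ω ∈ X) ∧ (∀ y ∈ X, ∃ j, dist y (x j ω) ≤ ρ / 3) ∧
             hausdorffDist (Set.range fun j => x j ω) X ≤ ρ / 3} :=
  stmt11_general P X hXc μ hμX ρ hρ v hv hvpos ξ hξ0 n x hmeas hindep hlaw hn
end
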